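/- Let X ⊆ ℝ^s be compact, f : X → ℝ^p continuous, M_0 a p×p positive semidefinite symmetric real matrix, and a ∈ (0,1). For a Borel probability measure ξ on X let M(ξ) = ∫_X f(x) f(x)ᵀ dξ(x) and R(ξ) = a·M(ξ) + (1−a)·M_0. If ξ* has R(ξ*) positive definite and ξ* maximizes det R(ξ) over all Borel probability measures on X, then f(x)ᵀ R(ξ*)⁻¹ f(x) = trace( M(ξ*) R(ξ*)⁻¹ ) for ξ*-almost every x ∈ X; in particular the sensitivity function attains its extreme value at the support points of ξ*. -/

import Mathlib

open Matrix MeasureTheory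

/-- Information matrix `M(ξ) = ∫ f(x) f(x)ᵀ dξ(x)` of a design `ξ` on `X`. -/
noncomputable def infoM {s p : ℕ} {X : Set (Fin s → ℝ)} (f : X → Fin p → ℝ)
    (ξ : Measure X) : Matrix (Fin p) (Fin p) ℝ :=
  Matrix.of fun i j => ∫ x, f x i * f x j ∂ξ

/-- Augmented information matrix `R(ξ) = a M(ξ) + (1 − a) M₀`. -/
noncomputable def augM {s p : ℕ} {X : Set (Fin s → ℝ)} (f : X → Fin p → ℝ)
    (M0 : Matrix (Fin p) (Fin p) ℝ) (a : ℝ) (ξ : Measure X) :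
    Matrix (Fin p) (Fin p) ℝ :=
  a • infoM f ξ + (1 - a) • M0

/-!
At a D-optimal design `ξ*`, moving a small mass `t` towards a one-point design `δₓ` changes
`R` to `R + t a (f(x) f(x)ᵀ - M(ξ*))`. Since `det (R + t D) = det R (1 + t tr(D R⁻¹) + O(t²))`,
maximality of `det R(ξ*)` forces `tr(D R⁻¹) ≤ 0`, i.e. the sensitivity
`d(x) = f(x)ᵀ R⁻¹ f(x)` is at most `tr(M(ξ*) R⁻¹)` for every `x`. But the `ξ*`-mean of `d`
is exactly `tr(M(ξ*) R⁻¹)`, so the inequality is an equality `ξ*`-almost everywhere.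
-/

open Filter Topology

namespace Matrix

theorem dotProduct_mulVec_self_eq_trace {n α : Type*} [Fintype n] [CommSemiring α]
    (A : Matrix n n α) (v : n → α) : v ⬝ᵥ A *ᵥ v = trace (vecMulVec v v * A) := by
  rw [dotProduct_mulVec, vecMulVec_mul, trace_vecMulVec, dotProduct_comm]

theorem trace_mul_inv_nonpos_of_det_add_smul_le {n : Type*} [Fintype n] [DecidableEq n]
    {R D : Matrix n n ℝ} (hR : 0 < R.det)
    (h : ∀ᶠ t in 𝓝[>] (0 : ℝ), (R + t • D).det ≤ R.det) : trace (D * R⁻¹) ≤ 0 := by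
  set C := D * R⁻¹
  set q : Polynomial ℝ :=
    (det (1 + (Polynomial.X : Polynomial ℝ) • C.map Polynomial.C)).divX.divX
  have hfactor (t : ℝ) : R + t • D = (1 + t • C) * R := by
    rw [Matrix.add_mul, Matrix.one_mul, Matrix.smul_mul, Matrix.mul_assoc,
      nonsing_inv_mul R hR.ne'.isUnit, Matrix.mul_one]
  have hslope : ∀ᶠ t in 𝓝[>] (0 : ℝ), trace C + q.eval t * t ≤ 0 := by
    filter_upwards [h, self_mem_nhdsWithin] with t ht (htpos : 0 < t)
    rw [hfactor, det_mul, det_one_add_smul] at ht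
    have : (trace C + q.eval t * t) * t ≤ 0 := by nlinarith
    exact nonpos_of_mul_nonpos_left this htpos
  have hlim : Tendsto (fun t => trace C + q.eval t * t) (𝓝[>] 0) (𝓝 (trace C)) := by
    have hcont : Continuous fun t : ℝ => trace C + q.eval t * t := by fun_prop
    simpa using (hcont.tendsto 0).mono_left nhdsWithin_le_nhds
  exact le_of_tendsto hlim hslope

end Matrix

theorem isProbabilityMeasure_mix {α : Type*} [MeasurableSpace α] (μ ν : Measure α)
    [IsProbabilityMeasure μ] [IsProbabilityMeasure ν] {t : ℝ} (ht : t ∈ Set.Icc (0 : ℝ) 1) :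
    IsProbabilityMeasure (ENNReal.ofReal (1 - t) • μ + ENNReal.ofReal t • ν) := by
  constructor
  simp only [Measure.add_apply, Measure.smul_apply, measure_univ, smul_eq_mul, mul_one]
  rw [← ENNReal.ofReal_add (by linarith [ht.2]) ht.1]
  norm_num

section Design

variable {s p : ℕ} {X : Set (Fin s → ℝ)} {f : X → Fin p → ℝ}

theorem integrable_mul_apply [CompactSpace X] (hf : Continuous f) (ξ : Measure X)
    [IsFiniteMeasure ξ] (i j : Fin p) : Integrable (fun x => f x i * f x j) ξ :=
  (by fun_prop : Continuous fun x => f x i * f x j).integrable_of_hasCompactSupport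
    (HasCompactSupport.of_compactSpace _)

theorem infoM_add {ξ ν : Measure X} (hξ : ∀ i j, Integrable (fun x => f x i * f x j) ξ)
    (hν : ∀ i j, Integrable (fun x => f x i * f x j) ν) :
    infoM f (ξ + ν) = infoM f ξ + infoM f ν := by
  ext i j
  exact integral_add_measure (hξ i j) (hν i j)

theorem infoM_smul (c : ENNReal) (ξ : Measure X) : infoM f (c • ξ) = c.toReal • infoM f ξ := by
  ext i j
  exact integral_smul_measure _ c

theorem infoM_dirac (x : X) : infoM f (Measure.dirac x) = vecMulVec (f x) (f x) := by
  ext i j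
  exact integral_dirac _ x

theorem augM_mix_dirac {ξ : Measure X} (hξ : ∀ i j, Integrable (fun x => f x i * f x j) ξ)
    (M0 : Matrix (Fin p) (Fin p) ℝ) (a : ℝ) (x : X) {t : ℝ} (ht : t ∈ Set.Icc (0 : ℝ) 1) :
    augM f M0 a (ENNReal.ofReal (1 - t) • ξ + ENNReal.ofReal t • Measure.dirac x) =
      augM f M0 a ξ + t • (a • (vecMulVec (f x) (f x) - infoM f ξ)) := by
  have hδ (i j : Fin p) : Integrable (fun y => f y i * f y j) (Measure.dirac x) :=
    integrable_dirac (by simp [ENNReal.mul_lt_top])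
  rw [augM, augM, infoM_add (fun i j => (hξ i j).smul_measure ENNReal.ofReal_ne_top)
    (fun i j => (hδ i j).smul_measure ENNReal.ofReal_ne_top), infoM_smul, infoM_smul,
    infoM_dirac, ENNReal.toReal_ofReal (by linarith [ht.2]), ENNReal.toReal_ofReal ht.1]
  module

theorem integral_dotProduct_mulVec {ξ : Measure X}
    (hξ : ∀ i j, Integrable (fun x => f x i * f x j) ξ) (A : Matrix (Fin p) (Fin p) ℝ) :
    ∫ x, f x ⬝ᵥ A *ᵥ f x ∂ξ = trace (infoM f ξ * A) := by
  simp only [dotProduct_mulVec_self_eq_trace, trace, diag, mul_apply, vecMulVec_apply,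
    infoM, of_apply]
  rw [integral_finsetSum _ fun i _ => integrable_finsetSum _ fun j _ => (hξ i j).mul_const _]
  refine Finset.sum_congr rfl fun i _ => ?_
  rw [integral_finsetSum _ fun j _ => (hξ i j).mul_const _]
  exact Finset.sum_congr rfl fun j _ => integral_mul_const _ _

theorem integrable_dotProduct_mulVec {ξ : Measure X}
    (hξ : ∀ i j, Integrable (fun x => f x i * f x j) ξ) (A : Matrix (Fin p) (Fin p) ℝ) :
    Integrable (fun x => f x ⬝ᵥ A *ᵥ f x) ξ := by
  simp only [dotProduct_mulVec_self_eq_trace, trace, diag, mul_apply, vecMulVec_apply]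
  exact integrable_finsetSum _ fun i _ => integrable_finsetSum _ fun j _ =>
    (hξ i j).mul_const _

theorem dotProduct_mulVec_le_trace_of_det_le [CompactSpace X] (hf : Continuous f)
    {M0 : Matrix (Fin p) (Fin p) ℝ} {a : ℝ} (ha : 0 < a) {ξs : Measure X}
    [IsProbabilityMeasure ξs] (hR : 0 < (augM f M0 a ξs).det)
    (hopt : ∀ ξ : Measure X, IsProbabilityMeasure ξ →
        (augM f M0 a ξ).det ≤ (augM f M0 a ξs).det) (x : X) :
    f x ⬝ᵥ (augM f M0 a ξs)⁻¹ *ᵥ f x ≤ trace (infoM f ξs * (augM f M0 a ξs)⁻¹) := by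
  set R := augM f M0 a ξs
  set N := vecMulVec (f x) (f x)
  have hdir : trace ((a • (N - infoM f ξs)) * R⁻¹) ≤ 0 := by
    refine trace_mul_inv_nonpos_of_det_add_smul_le hR ?_
    filter_upwards [Ioc_mem_nhdsGT one_pos] with t ht
    have ht' : t ∈ Set.Icc (0 : ℝ) 1 := ⟨ht.1.le, ht.2⟩
    rw [← augM_mix_dirac (integrable_mul_apply hf ξs) M0 a x ht']
    exact hopt _ (isProbabilityMeasure_mix _ _ ht')
  rw [Matrix.smul_mul, trace_smul, Matrix.sub_mul, trace_sub, smul_eq_mul] at hdir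
  rw [dotProduct_mulVec_self_eq_trace, ← sub_nonpos]
  exact nonpos_of_mul_nonpos_right hdir ha

end Design

theorem stmt6_general {s p : ℕ} (X : Set (Fin s → ℝ)) (hX : IsCompact X)
    (f : X → Fin p → ℝ) (hf : Continuous f)
    (M0 : Matrix (Fin p) (Fin p) ℝ)
    (a : ℝ) (ha : a ∈ Set.Ioo (0 : ℝ) 1)
    (ξs : Measure X) [IsProbabilityMeasure ξs]
    (hR : (augM f M0 a ξs).PosDef)
    (hopt : ∀ ξ : Measure X, IsProbabilityMeasure ξ →
        (augM f M0 a ξ).det ≤ (augM f M0 a ξs).det) :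
    ∀ᵐ x ∂ξs, f x ⬝ᵥ (augM f M0 a ξs)⁻¹ *ᵥ f x =
      Matrix.trace (infoM f ξs * (augM f M0 a ξs)⁻¹) := by
  have : CompactSpace X := isCompact_iff_compactSpace.mp hX
  have hint := integrable_mul_apply hf ξs
  have hle := dotProduct_mulVec_le_trace_of_det_le hf ha.1 hR.det_pos hopt
  have hmean : ∫ x, f x ⬝ᵥ (augM f M0 a ξs)⁻¹ *ᵥ f x ∂ξs =
      ∫ _, trace (infoM f ξs * (augM f M0 a ξs)⁻¹) ∂ξs := by
    rw [integral_dotProduct_mulVec hint, integral_const, probReal_univ, one_smul]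
  exact (integral_eq_iff_of_ae_le (integrable_dotProduct_mulVec hint _) (integrable_const _)
    (ae_of_all _ hle)).mp hmean

/-- Support-point condition of the general equivalence theorem (D-criterion case):
if `ξ*` maximizes `det R(ξ)`, then the sensitivity function attains its extreme value
`trace(M(ξ*) R(ξ*)⁻¹)` at `ξ*`-almost every point. -/
theorem stmt6 {s p : ℕ} (X : Set (Fin s → ℝ)) (hX : IsCompact X)
    (f : X → Fin p → ℝ) (hf : Continuous f)
    (M0 : Matrix (Fin p) (Fin p) ℝ) (hM0 : M0.PosSemidef)
    (a : ℝ) (ha : a ∈ Set.Ioo (0 : ℝ) 1)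
    (ξs : Measure X) [IsProbabilityMeasure ξs]
    (hR : (augM f M0 a ξs).PosDef)
    (hopt : ∀ ξ : Measure X, IsProbabilityMeasure ξ →
        (augM f M0 a ξ).det ≤ (augM f M0 a ξs).det) :
    ∀ᵐ x ∂ξs, f x ⬝ᵥ (augM f M0 a ξs)⁻¹ *ᵥ f x =
      Matrix.trace (infoM f ξs * (augM f M0 a ξs)⁻¹) :=
  stmt6_general X hX f hf M0 a ha ξs hR hopt
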